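/- Let n ≥ 1 and let σ : ℤⁿ × ℝⁿ → ℂ be such that for each k ∈ ℤⁿ the function x ↦ σ(k, x) is continuous and 1-periodic (σ(k, x + j) = σ(k, x) for all j ∈ ℤⁿ). Define τ(x, k) := conj(σ(−k, x)). Then for all finitely supported functions f, g : ℤⁿ → ℂ one has Σ_{k ∈ ℤⁿ} (t_σ f)(k) · conj(g(k)) = ∫_{[0,1]ⁿ} u_f(x) · conj((τ(·, D) u_g)(x)) dx, where u_f(x) := Σ_{j ∈ ℤⁿ} f(j) e^{−2πi j·x} (a finite sum), (t_σ f)(k) := ∫_{[0,1]ⁿ} e^{2πi k·ξ} σ(k, ξ) u_f(ξ) dξ, and (τ(·, D) w)(x) := Σ_{k ∈ ℤⁿ} e^{2πi k·x} τ(x, k) ŵ(k) with ŵ(k) := ∫_{[0,1]ⁿ} e^{−2πi k·y} w(y) dy (for w = u_g this sum is finite, since ŵ(k) = g(−k)). This identity expresses that the discrete pseudo-differential operator t_σ on ℓ²(ℤⁿ) is unitarily equivalent, via the Fourier transform of ℤⁿ, to the adjoint of the periodic pseudo-differential operator τ(·, D) on L²(𝕋ⁿ). -/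

import Mathlib

open scoped BigOperators
open MeasureTheory

/-- The character `x ↦ e^{2πi k·x}` on `ℝⁿ`, `k ∈ ℤⁿ`. -/
noncomputable def eK {n : ℕ} (k : Fin n → ℤ) (x : Fin n → ℝ) : ℂ :=
  Complex.exp (2 * (Real.pi : ℂ) * Complex.I * ((∑ i, (k i : ℝ) * x i : ℝ) : ℂ))

/-- The Fourier transform on `ℤⁿ` of a (finitely supported) function `f : ℤⁿ → ℂ`:
`u_f(x) = Σ_j f(j) e^{-2πi j·x}`. -/
noncomputable def uF {n : ℕ} (f : (Fin n → ℤ) → ℂ) (x : Fin n → ℝ) : ℂ :=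
  ∑ᶠ j : Fin n → ℤ, f j * eK (-j) x

/-- The discrete pseudo-differential operator with symbol `σ : ℤⁿ × 𝕋ⁿ → ℂ`:
`(t_σ f)(k) = ∫_{[0,1]ⁿ} e^{2πi k·ξ} σ(k,ξ) u_f(ξ) dξ`. -/
noncomputable def discretePDO {n : ℕ} (σ : (Fin n → ℤ) → (Fin n → ℝ) → ℂ)
    (f : (Fin n → ℤ) → ℂ) (k : Fin n → ℤ) : ℂ :=
  ∫ ξ in Set.Icc (0 : Fin n → ℝ) 1, eK k ξ * σ k ξ * uF f ξ

/-- The `k`-th Fourier coefficient `ŵ(k) = ∫_{[0,1]ⁿ} e^{-2πi k·y} w(y) dy` of a function on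
the torus. -/
noncomputable def torFourierCoeff {n : ℕ} (w : (Fin n → ℝ) → ℂ) (k : Fin n → ℤ) : ℂ :=
  ∫ y in Set.Icc (0 : Fin n → ℝ) 1, eK (-k) y * w y

/-- The toroidal (periodic) pseudo-differential operator with symbol `τ : 𝕋ⁿ × ℤⁿ → ℂ`:
`(τ(·,D) w)(x) = Σ_k e^{2πi k·x} τ(x,k) ŵ(k)`. -/
noncomputable def toroidalPDO {n : ℕ} (τ : (Fin n → ℝ) → (Fin n → ℤ) → ℂ)
    (w : (Fin n → ℝ) → ℂ) (x : Fin n → ℝ) : ℂ :=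
  ∑ᶠ k : Fin n → ℤ, eK k x * τ x k * torFourierCoeff w k

lemma eK_mul {n : ℕ} (k j : Fin n → ℤ) (x : Fin n → ℝ) :
    eK k x * eK j x = eK (k + j) x := by
  unfold eK
  rw [← Complex.exp_add]
  congr 1
  push_cast [Pi.add_apply]
  rw [← mul_add, ← Finset.sum_add_distrib]
  congr 1
  exact Finset.sum_congr rfl fun i _ => by ring

lemma eK_conj {n : ℕ} (k : Fin n → ℤ) (x : Fin n → ℝ) :
    (starRingEnd ℂ) (eK k x) = eK (-k) x := by
  unfold eK
  rw [← Complex.exp_conj]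
  congr 1
  simp only [map_mul, Complex.conj_I, Complex.conj_ofReal, map_ofNat]
  push_cast [Pi.neg_apply]
  rw [Finset.sum_congr rfl (fun i (_ : i ∈ Finset.univ) => by ring :
    ∀ i ∈ Finset.univ, (-(k i) : ℂ) * x i = -((k i : ℂ) * x i)), Finset.sum_neg_distrib]
  ring

lemma eK_continuous {n : ℕ} (k : Fin n → ℤ) : Continuous (eK k) := by
  unfold eK
  fun_prop

lemma int1 (m : ℤ) :
    ∫ x in Set.Icc (0:ℝ) 1, Complex.exp (2 * (Real.pi:ℂ) * Complex.I * (m * x)) =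
      if m = 0 then 1 else 0 := by
  by_cases h : m = 0
  · simp [h]
  · rw [if_neg h, MeasureTheory.integral_Icc_eq_integral_Ioc,
      ← intervalIntegral.integral_of_le (zero_le_one)]
    have hc : (2 * (Real.pi:ℂ) * Complex.I * m) ≠ 0 := by
      simp [Real.pi_ne_zero, Complex.I_ne_zero, h]
    have := integral_exp_mul_complex (a := 0) (b := 1) hc
    simp only [mul_assoc] at this ⊢
    rw [show (fun x : ℝ => Complex.exp (2 * ((Real.pi:ℂ) * (Complex.I * ((m:ℂ) * x))))) =
      (fun x : ℝ => Complex.exp (2 * (Real.pi:ℂ) * Complex.I * (m:ℂ) * x)) from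
      funext fun x => by ring_nf] at this ⊢
    rw [this, show (2 * ((Real.pi:ℂ) * (Complex.I * ((m:ℂ) * ((1:ℝ):ℂ))))) =
        (m:ℂ) * (2 * Real.pi * Complex.I) by push_cast; ring,
      Complex.exp_int_mul_two_pi_mul_I m]
    simp

lemma integral_eK {n : ℕ} (m : Fin n → ℤ) :
    ∫ x in Set.Icc (0 : Fin n → ℝ) 1, eK m x = if m = 0 then 1 else 0 := by
  have hprod : ∀ x : Fin n → ℝ, eK m x =
      ∏ i, Complex.exp (2 * (Real.pi:ℂ) * Complex.I * ((m i : ℂ) * (x i : ℂ))) := by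
    intro x
    rw [eK, ← Complex.exp_sum]
    congr 1
    push_cast
    rw [Finset.mul_sum]
  simp_rw [hprod]
  rw [← MeasureTheory.integral_indicator measurableSet_Icc]
  have hind : ∀ x : Fin n → ℝ,
      (Set.Icc (0 : Fin n → ℝ) 1).indicator
        (fun x => ∏ i, Complex.exp (2 * (Real.pi:ℂ) * Complex.I * ((m i : ℂ) * (x i : ℂ)))) x =
      ∏ i, (Set.Icc (0:ℝ) 1).indicator
        (fun t => Complex.exp (2 * (Real.pi:ℂ) * Complex.I * ((m i : ℂ) * (t : ℂ)))) (x i) := by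
    intro x
    by_cases hx : x ∈ Set.Icc (0 : Fin n → ℝ) 1
    · rw [Set.indicator_of_mem hx]
      refine Finset.prod_congr rfl fun i _ => ?_
      rw [Set.indicator_of_mem (show x i ∈ Set.Icc (0:ℝ) 1 from Set.mem_Icc.mpr ⟨hx.1 i, hx.2 i⟩)]
    · rw [Set.indicator_of_notMem hx]
      obtain ⟨i, hi⟩ : ∃ i, x i ∉ Set.Icc (0:ℝ) 1 := by
        by_contra hcon
        push_neg at hcon
        exact hx (Set.mem_Icc.mpr ⟨fun i => (Set.mem_Icc.mp (hcon i)).1,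
          fun i => (Set.mem_Icc.mp (hcon i)).2⟩)
      exact (Finset.prod_eq_zero (Finset.mem_univ i)
        (by rw [Set.indicator_of_notMem hi])).symm
  simp_rw [hind]
  rw [MeasureTheory.integral_fintype_prod_volume_eq_prod (ι := Fin n)
    (f := fun i t => (Set.Icc (0:ℝ) 1).indicator
      (fun t => Complex.exp (2 * (Real.pi:ℂ) * Complex.I * ((m i : ℂ) * (t : ℂ)))) t)]
  simp_rw [MeasureTheory.integral_indicator measurableSet_Icc, int1]
  by_cases h : m = 0
  · simp [h]
  · rw [if_neg h]
    obtain ⟨i, hi⟩ : ∃ i, m i ≠ 0 := by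
      by_contra hcon; push_neg at hcon; exact h (funext hcon)
    exact Finset.prod_eq_zero (Finset.mem_univ i) (by rw [if_neg hi])

lemma uF_eq {n : ℕ} (f : (Fin n → ℤ) → ℂ) (hf : (Function.support f).Finite)
    (x : Fin n → ℝ) : uF f x = ∑ j ∈ hf.toFinset, f j * eK (-j) x := by
  refine finsum_eq_sum_of_support_subset _ ?_
  intro j hj
  have : f j ≠ 0 := fun h0 => hj (by simp [h0])
  simpa using this

lemma uF_continuous {n : ℕ} (f : (Fin n → ℤ) → ℂ) (hf : (Function.support f).Finite) :
    Continuous (uF f) := by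
  have : uF f = fun x => ∑ j ∈ hf.toFinset, f j * eK (-j) x :=
    funext fun x => uF_eq f hf x
  rw [this]
  exact continuous_finset_sum _ fun j _ => continuous_const.mul (eK_continuous _)

lemma torFourierCoeff_uF {n : ℕ} (g : (Fin n → ℤ) → ℂ)
    (hg : (Function.support g).Finite) (k : Fin n → ℤ) :
    torFourierCoeff (uF g) k = g (-k) := by
  unfold torFourierCoeff
  have h1 : ∀ y : Fin n → ℝ, eK (-k) y * uF g y
      = ∑ j ∈ hg.toFinset, g j * eK (-k + -j) y := by
    intro y
    rw [uF_eq g hg, Finset.mul_sum]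
    exact Finset.sum_congr rfl fun j _ => by rw [← eK_mul]; ring
  simp_rw [h1]
  rw [MeasureTheory.integral_finset_sum _ (f := fun j y => g j * eK (-k + -j) y) fun j _ =>
    (continuous_const.mul (eK_continuous _)).integrableOn_Icc]
  have h2 : ∀ j ∈ hg.toFinset,
      (∫ y in Set.Icc (0 : Fin n → ℝ) 1, g j * eK (-k + -j) y)
      = if j = -k then g j else 0 := by
    intro j _
    rw [MeasureTheory.integral_const_mul, integral_eK]
    by_cases hj : j = -k
    · rw [if_pos (by simp [hj]), if_pos hj, mul_one]
    · rw [if_neg, if_neg hj, mul_zero]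
      intro hc
      exact hj (by simpa using neg_eq_of_add_eq_zero_left hc)
  rw [Finset.sum_congr rfl h2, Finset.sum_ite_eq' hg.toFinset (-k) g]
  by_cases hm : -k ∈ hg.toFinset
  · rw [if_pos hm]
  · rw [if_neg hm]
    symm
    rw [← Function.notMem_support]
    simpa using hm

/-- Via the Fourier transform of `ℤⁿ`, the discrete pseudo-differential operator `t_σ` on
`ℓ²(ℤⁿ)` is unitarily equivalent to the adjoint of the periodic pseudo-differential operator
`τ(·,D)` on `L²(𝕋ⁿ)`, where `τ(x,k) = conj(σ(-k,x))`: for finitely supported `f, g`,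
`Σ_k (t_σ f)(k) conj(g(k)) = ∫_{[0,1]ⁿ} u_f(x) conj((τ(·,D) u_g)(x)) dx`. -/
theorem discretePDO_unitarily_equivalent_adjoint_toroidalPDO
    (n : ℕ) (hn : 1 ≤ n)
    (σ : (Fin n → ℤ) → (Fin n → ℝ) → ℂ)
    (hcont : ∀ k : Fin n → ℤ, Continuous (σ k))
    (hper : ∀ (k : Fin n → ℤ) (x : Fin n → ℝ) (j : Fin n → ℤ),
      σ k (x + fun i => (j i : ℝ)) = σ k x)
    (f g : (Fin n → ℤ) → ℂ)
    (hf : (Function.support f).Finite) (hg : (Function.support g).Finite) :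
    (∑ᶠ k : Fin n → ℤ, discretePDO σ f k * (starRingEnd ℂ) (g k)) =
      ∫ x in Set.Icc (0 : Fin n → ℝ) 1,
        uF f x *
          (starRingEnd ℂ)
            (toroidalPDO (fun x k => (starRingEnd ℂ) (σ (-k) x)) (uF g) x) := by
  classical
  set S := hg.toFinset with hS
  -- Step B: compute the toroidal PDO applied to uF g
  have htor : ∀ x : Fin n → ℝ,
      toroidalPDO (fun x k => (starRingEnd ℂ) (σ (-k) x)) (uF g) x
        = ∑ j ∈ S, eK (-j) x * (starRingEnd ℂ) (σ j x) * g j := by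
    intro x
    unfold toroidalPDO
    have hco : ∀ k : Fin n → ℤ,
        eK k x * (starRingEnd ℂ) (σ (-k) x) * torFourierCoeff (uF g) k
          = eK k x * (starRingEnd ℂ) (σ (-k) x) * g (-k) := by
      intro k
      rw [torFourierCoeff_uF g hg]
    simp only [hco]
    rw [finsum_eq_sum_of_support_subset _
      (s := S.image (fun j => -j)) ?_]
    · rw [Finset.sum_image (fun a _ b _ h => neg_injective h)]
      refine Finset.sum_congr rfl fun j _ => ?_
      rw [neg_neg]
    · intro k hk
      have hgk : g (-k) ≠ 0 := fun h0 => hk (by simp [h0])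
      simp only [Finset.coe_image, Set.mem_image, Finset.mem_coe]
      exact ⟨-k, by rw [hS, Set.Finite.mem_toFinset]; exact hgk, neg_neg k⟩
  -- Step C: the conjugate
  have hconj : ∀ x : Fin n → ℝ,
      (starRingEnd ℂ) (toroidalPDO (fun x k => (starRingEnd ℂ) (σ (-k) x)) (uF g) x)
        = ∑ j ∈ S, eK j x * σ j x * (starRingEnd ℂ) (g j) := by
    intro x
    rw [htor x, map_sum]
    refine Finset.sum_congr rfl fun j _ => ?_
    rw [map_mul, map_mul, eK_conj, neg_neg, Complex.conj_conj]
  -- Step D: compute the RHS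
  have hRHS : (∫ x in Set.Icc (0 : Fin n → ℝ) 1,
      uF f x * (starRingEnd ℂ)
        (toroidalPDO (fun x k => (starRingEnd ℂ) (σ (-k) x)) (uF g) x))
      = ∑ j ∈ S, discretePDO σ f j * (starRingEnd ℂ) (g j) := by
    have hpt : ∀ x : Fin n → ℝ,
        uF f x * (starRingEnd ℂ)
          (toroidalPDO (fun x k => (starRingEnd ℂ) (σ (-k) x)) (uF g) x)
        = ∑ j ∈ S, (eK j x * σ j x * uF f x) * (starRingEnd ℂ) (g j) := by
      intro x
      rw [hconj x, Finset.mul_sum]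
      exact Finset.sum_congr rfl fun j _ => by ring
    simp_rw [hpt]
    rw [MeasureTheory.integral_finset_sum _
      (f := fun j x => eK j x * σ j x * uF f x * (starRingEnd ℂ) (g j)) fun j _ =>
      ((((eK_continuous j).mul (hcont j)).mul (uF_continuous f hf)).mul
        continuous_const).integrableOn_Icc]
    refine Finset.sum_congr rfl fun j _ => ?_
    rw [MeasureTheory.integral_mul_const]
    rfl
  rw [hRHS]
  refine finsum_eq_sum_of_support_subset _ ?_
  intro k hk
  have : g k ≠ 0 := by
    intro h0
    apply hk
    simp [h0]
  rw [hS]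
  simpa [Set.Finite.mem_toFinset] using this
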